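/- For every finite binary sequence s ∈ {0,1}^{<ℕ}, the identity y_s = x_s y_{s0} y_{s10}⁻¹ y_{s11} holds in Homeo(C); i.e. for every ξ ∈ C, ξ·y_s = (((ξ·x_s)·y_{s0})·y_{s10}⁻¹)·y_{s11}. -/

import Mathlib

/-- The Cantor set of infinite binary sequences. -/
abbrev Cantor : Type := ℕ → Bool

/-- Concatenation of a finite binary sequence with an infinite binary sequence. -/
def cat (s : List Bool) (η : Cantor) : Cantor :=
  fun n => if h : n < s.length then s.get ⟨n, h⟩ else η (n - s.length)

/-- `s` is a (finite) prefix of the infinite sequence `ξ`. -/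
def IsPrefixOf (s : List Bool) (ξ : Cantor) : Prop := ∃ η : Cantor, ξ = cat s η

/-- The group of self-homeomorphisms of a topological space, with
`(f * g) ξ = f (g ξ)` (i.e. in the right-action convention `ξ·(g h) = (ξ·g)·h`,
the product `g * f` corresponds to the word "apply `f`, then `g`"). -/
instance {α : Type*} [TopologicalSpace α] : Group (α ≃ₜ α) where
  mul f g := g.trans f
  one := Homeomorph.refl α
  inv := Homeomorph.symm
  mul_assoc _ _ _ := Homeomorph.ext fun _ => rfl
  one_mul _ := Homeomorph.ext fun _ => rfl
  mul_one _ := Homeomorph.ext fun _ => rfl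
  inv_mul_cancel f := Homeomorph.ext fun ξ => f.symm_apply_apply ξ

@[simp] lemma homeo_mul_apply {α : Type*} [TopologicalSpace α] (f g : α ≃ₜ α) (ξ : α) :
    (f * g) ξ = f (g ξ) := rfl

@[simp] lemma homeo_one_apply {α : Type*} [TopologicalSpace α] (ξ : α) :
    (1 : α ≃ₜ α) ξ = ξ := rfl

@[simp] lemma homeo_inv_apply {α : Type*} [TopologicalSpace α] (f : α ≃ₜ α) (ξ : α) :
    (f⁻¹ : α ≃ₜ α) ξ = f.symm ξ := rfl

/-- The data of the basic homeomorphisms `x`, `y`, `x_s`, `y_s`, `p_n` of the Cantor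
set, together with their recursive defining equations. -/
structure LMData where
  x : Cantor ≃ₜ Cantor
  y : Cantor ≃ₜ Cantor
  xx : List Bool → Cantor ≃ₜ Cantor
  yy : List Bool → Cantor ≃ₜ Cantor
  p : ℕ → Cantor ≃ₜ Cantor
  hx00 : ∀ η, x (cat [false, false] η) = cat [false] η
  hx01 : ∀ η, x (cat [false, true] η) = cat [true, false] η
  hx1 : ∀ η, x (cat [true] η) = cat [true, true] η
  hy00 : ∀ η, y (cat [false, false] η) = cat [false] (y η)
  hy01 : ∀ η, y (cat [false, true] η) = cat [true, false] (y.symm η)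
  hy1 : ∀ η, y (cat [true] η) = cat [true, true] (y η)
  hxx : ∀ s η, xx s (cat s η) = cat s (x η)
  hxx' : ∀ s ξ, ¬ IsPrefixOf s ξ → xx s ξ = ξ
  hyy : ∀ s η, yy s (cat s η) = cat s (y η)
  hyy' : ∀ s ξ, ¬ IsPrefixOf s ξ → yy s ξ = ξ
  hp1 : ∀ n k η, k < n → p n (cat (List.replicate k true ++ [false]) η) =
      cat (List.replicate (k + 1) true ++ [false]) η
  hp2 : ∀ n η, p n (cat (List.replicate n true ++ [false]) η) =
      cat (List.replicate (n + 1) true) η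
  hp3 : ∀ n η, p n (cat (List.replicate (n + 1) true) η) = cat [false] η

/-- Thompson's group `T`, generated by all `x_s` and all `p_n`. -/
def Tgrp (D : LMData) : Subgroup (Cantor ≃ₜ Cantor) :=
  Subgroup.closure (Set.range D.xx ∪ Set.range D.p)

/-- The group `Ŝ`, generated by all `x_s`, all `y_s` and all `p_n`. -/
def Shat (D : LMData) : Subgroup (Cantor ≃ₜ Cantor) :=
  Subgroup.closure (Set.range D.xx ∪ Set.range D.yy ∪ Set.range D.p)

/-- The homeomorphism `y₁₀ y₁₁₀⁻¹` (right-action word: first `y₁₀`, then `y₁₁₀⁻¹`). -/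
def sgen (D : LMData) : Cantor ≃ₜ Cantor :=
  (D.yy [true, true, false])⁻¹ * D.yy [true, false]

/-- The group `S`, generated by Thompson's group `T` together with `y₁₀ y₁₁₀⁻¹`. -/
def Sgrp (D : LMData) : Subgroup (Cantor ≃ₜ Cantor) :=
  Subgroup.closure (↑(Tgrp D) ∪ {sgen D})

/-- The Lodha–Moore group `_yG_y`, generated by all `x_s` and all `y_s`. -/
def LMgrp (D : LMData) : Subgroup (Cantor ≃ₜ Cantor) :=
  Subgroup.closure (Set.range D.xx ∪ Set.range D.yy)

/-!
Every factor fixes the points outside the cone `sC`, and on `sC` each acts behind the prefix `s`: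
`(sη)·y_{st} = s(η·y_t)`. So the identity reduces to the case `s = ∅`, i.e. `y = x y_0 y_10⁻¹ y_11`,
which one checks on the cones `1C`, `00C`, `01C` from the recursive definitions of `x` and `y`.
-/

lemma cat_append (s t : List Bool) (η : Cantor) : cat (s ++ t) η = cat s (cat t η) := by
  funext n
  simp only [cat, List.length_append, List.get_eq_getElem, List.getElem_append]
  split_ifs <;> first | rfl | omega | (congr 1; omega)

lemma cat_pair (a b : Bool) (η : Cantor) : cat [a, b] η = cat [a] (cat [b] η) :=
  cat_append [a] [b] η

lemma cat_injective (s : List Bool) : Function.Injective (cat s) := by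
  intro η ζ h
  funext n
  simpa [cat] using congrFun h (n + s.length)

lemma cat_singleton_head_tail (η : Cantor) : cat [η 0] (fun n => η (n + 1)) = η := by
  funext n
  cases n <;> simp [cat]

lemma exists_eq_cat_singleton (η : Cantor) : ∃ b ζ, η = cat [b] ζ :=
  ⟨η 0, _, (cat_singleton_head_tail η).symm⟩

lemma IsPrefixOf.of_append {s t : List Bool} {ξ : Cantor} (h : IsPrefixOf (s ++ t) ξ) :
    IsPrefixOf s ξ := by
  obtain ⟨η, rfl⟩ := h
  exact ⟨cat t η, cat_append ..⟩

lemma isPrefixOf_append_cat_iff {s t : List Bool} {ζ : Cantor} :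
    IsPrefixOf (s ++ t) (cat s ζ) ↔ IsPrefixOf t ζ := by
  simp only [IsPrefixOf, cat_append, (cat_injective s).eq_iff]

lemma not_isPrefixOf_cons_cat_singleton {b c : Bool} (hbc : b ≠ c) (t : List Bool)
    (ζ : Cantor) : ¬ IsPrefixOf (b :: t) (cat [c] ζ) := by
  rintro ⟨η, h⟩
  exact hbc (by simpa [cat] using (congrFun h 0).symm)

namespace LMData

variable (D : LMData)

lemma yy_symm_cat (s : List Bool) (η : Cantor) : (D.yy s).symm (cat s η) = cat s (D.y.symm η) := by
  rw [Homeomorph.symm_apply_eq, D.hyy, Homeomorph.apply_symm_apply]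

lemma yy_symm_of_not_isPrefixOf {s : List Bool} {ξ : Cantor} (h : ¬ IsPrefixOf s ξ) :
    (D.yy s).symm ξ = ξ := by
  rw [Homeomorph.symm_apply_eq, D.hyy' s ξ h]

lemma yy_append_cat (s t : List Bool) (ζ : Cantor) :
    D.yy (s ++ t) (cat s ζ) = cat s (D.yy t ζ) := by
  by_cases h : IsPrefixOf t ζ
  · obtain ⟨η, rfl⟩ := h
    rw [← cat_append, D.hyy, D.hyy, cat_append]
  · rw [D.hyy' t ζ h, D.hyy' _ _ (isPrefixOf_append_cat_iff.not.mpr h)]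

lemma yy_symm_append_cat (s t : List Bool) (ζ : Cantor) :
    (D.yy (s ++ t)).symm (cat s ζ) = cat s ((D.yy t).symm ζ) := by
  rw [Homeomorph.symm_apply_eq, D.yy_append_cat, Homeomorph.apply_symm_apply]

lemma yy_cons_cat_singleton (b : Bool) (t : List Bool) (ζ : Cantor) :
    D.yy (b :: t) (cat [b] ζ) = cat [b] (D.yy t ζ) :=
  D.yy_append_cat [b] t ζ

lemma yy_symm_cons_cat_singleton (b : Bool) (t : List Bool) (ζ : Cantor) :
    (D.yy (b :: t)).symm (cat [b] ζ) = cat [b] ((D.yy t).symm ζ) :=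
  D.yy_symm_append_cat [b] t ζ

lemma yy_cons_cat_singleton_of_ne {b c : Bool} (hbc : b ≠ c) (t : List Bool) (ζ : Cantor) :
    D.yy (b :: t) (cat [c] ζ) = cat [c] ζ :=
  D.hyy' _ _ (not_isPrefixOf_cons_cat_singleton hbc t ζ)

lemma yy_symm_cons_cat_singleton_of_ne {b c : Bool} (hbc : b ≠ c) (t : List Bool) (ζ : Cantor) :
    (D.yy (b :: t)).symm (cat [c] ζ) = cat [c] ζ :=
  D.yy_symm_of_not_isPrefixOf (not_isPrefixOf_cons_cat_singleton hbc t ζ)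

lemma y_eq_x_yy_word (η : Cantor) :
    D.y η = D.yy [true, true] ((D.yy [true, false]).symm (D.yy [false] (D.x η))) := by
  have hft : false ≠ true := Bool.false_ne_true
  obtain ⟨b, ζ, rfl⟩ := exists_eq_cat_singleton η
  cases b
  · obtain ⟨c, θ, rfl⟩ := exists_eq_cat_singleton ζ
    cases c
    · rw [← cat_pair, D.hy00, D.hx00, D.hyy, D.yy_symm_cons_cat_singleton_of_ne hft.symm,
        D.yy_cons_cat_singleton_of_ne hft.symm]
    · rw [← cat_pair, D.hy01, D.hx01]
      simp only [cat_pair]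
      rw [D.yy_cons_cat_singleton_of_ne hft, D.yy_symm_cons_cat_singleton, D.yy_symm_cat,
        D.yy_cons_cat_singleton, D.yy_cons_cat_singleton_of_ne hft.symm]
  · rw [D.hy1, D.hx1]
    simp only [cat_pair]
    rw [D.yy_cons_cat_singleton_of_ne hft, D.yy_symm_cons_cat_singleton,
      D.yy_symm_cons_cat_singleton_of_ne hft, D.yy_cons_cat_singleton, D.hyy]

end LMData

/-- `y_s = x_s y_{s0} y_{s10}⁻¹ y_{s11}` pointwise:
`ξ·y_s = (((ξ·x_s)·y_{s0})·y_{s10}⁻¹)·y_{s11}`. -/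
theorem statement12 (D : LMData) (s : List Bool) (ξ : Cantor) :
    D.yy s ξ =
      D.yy (s ++ [true, true])
        ((D.yy (s ++ [true, false])).symm (D.yy (s ++ [false]) (D.xx s ξ))) := by
  by_cases h : IsPrefixOf s ξ
  · obtain ⟨η, rfl⟩ := h
    rw [D.hyy, D.hxx, D.yy_append_cat, D.yy_symm_append_cat, D.yy_append_cat,
      D.y_eq_x_yy_word]
  · have hs : ∀ t, ¬ IsPrefixOf (s ++ t) ξ := fun t h' => h h'.of_append
    rw [D.hxx' s ξ h, D.hyy' _ ξ (hs _), D.yy_symm_of_not_isPrefixOf (hs _), D.hyy' _ ξ (hs _),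
      D.hyy' s ξ h]
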